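/- Let n ≥ 2, let t_{i,jk} ∈ [0,1) for 1 ≤ i ≤ n and 1 ≤ j < k ≤ n, and set λ_{i,jk} := e^{2πi t_{i,jk}}. Suppose there exists an index i, 1 ≤ i ≤ n, such that the real numbers {t_{i,jk} : 1 ≤ j < k ≤ n} together with 1 are linearly independent over ℚ (in particular each t_{i,jk} is irrational). Then the identity is the only σ_λ-regular central element of G(n). -/

import Mathlib

open scoped BigOperators

namespace FreeNilp

/-- Index set for pairs `(j,k)` with `j < k`. -/
abbrev PairIdx (n : ℕ) : Type := {p : Fin n × Fin n // p.1 < p.2}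

/-- The free nilpotent group of class 2 and rank `n`, realized on
`ℤ^n × ℤ^{n(n-1)/2}`. -/
@[ext] structure G (n : ℕ) where
  u : Fin n → ℤ
  v : PairIdx n → ℤ

namespace G

instance (n : ℕ) : Group (G n) where
  mul r s := ⟨fun i => r.u i + s.u i, fun p => r.v p + s.v p + r.u p.1.1 * s.u p.1.2⟩
  one := ⟨fun _ => 0, fun _ => 0⟩
  inv r := ⟨fun i => -r.u i, fun p => -r.v p + r.u p.1.1 * r.u p.1.2⟩
  mul_assoc r s t := by
    refine G.ext ?_ ?_ <;> funext x
    · show (r.u x + s.u x) + t.u x = r.u x + (s.u x + t.u x)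
      ring
    · show (r.v x + s.v x + r.u x.1.1 * s.u x.1.2) + t.v x +
          (r.u x.1.1 + s.u x.1.1) * t.u x.1.2 =
        r.v x + (s.v x + t.v x + s.u x.1.1 * t.u x.1.2) +
          r.u x.1.1 * (s.u x.1.2 + t.u x.1.2)
      ring
  one_mul r := by
    refine G.ext ?_ ?_ <;> funext x
    · show 0 + r.u x = r.u x
      ring
    · show 0 + r.v x + 0 * r.u x.1.2 = r.v x
      ring
  mul_one r := by
    refine G.ext ?_ ?_ <;> funext x
    · show r.u x + 0 = r.u x
      ring
    · show r.v x + 0 + r.u x.1.1 * 0 = r.v x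
      ring
  inv_mul_cancel r := by
    refine G.ext ?_ ?_ <;> funext x
    · show -r.u x + r.u x = 0
      ring
    · show (-r.v x + r.u x.1.1 * r.u x.1.2) + r.v x + -r.u x.1.1 * r.u x.1.2 = 0
      ring

@[simp] lemma mul_u {n : ℕ} (r s : G n) (i : Fin n) : (r * s).u i = r.u i + s.u i := rfl
@[simp] lemma mul_v {n : ℕ} (r s : G n) (p : PairIdx n) :
    (r * s).v p = r.v p + s.v p + r.u p.1.1 * s.u p.1.2 := rfl
@[simp] lemma one_u {n : ℕ} (i : Fin n) : (1 : G n).u i = 0 := rfl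
@[simp] lemma one_v {n : ℕ} (p : PairIdx n) : (1 : G n).v p = 0 := rfl
@[simp] lemma inv_u {n : ℕ} (r : G n) (i : Fin n) : (r⁻¹).u i = -r.u i := rfl
@[simp] lemma inv_v {n : ℕ} (r : G n) (p : PairIdx n) :
    (r⁻¹).v p = -r.v p + r.u p.1.1 * r.u p.1.2 := rfl

end G

/-- First-block coordinate `r_i`. -/
def uc {n : ℕ} (r : G n) (i : Fin n) : ℤ := r.u i

/-- Second-block coordinate `r_{jk}` (zero unless `j < k`). -/
def vc {n : ℕ} (r : G n) (j k : Fin n) : ℤ := if h : j < k then r.v ⟨(j, k), h⟩ else 0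

/-- A multiplier (2-cocycle with values in the circle group) of a group. -/
def IsMultiplier {Γ : Type*} [Group Γ] (σ : Γ → Γ → Circle) : Prop :=
  (∀ r s t : Γ, σ r s * σ (r * s) t = σ r (s * t) * σ s t) ∧
  ∀ r : Γ, σ r 1 = 1 ∧ σ 1 r = 1

/-- Similarity (cohomology) of multipliers. -/
def Similar {Γ : Type*} [Group Γ] (σ τ : Γ → Γ → Circle) : Prop :=
  ∃ β : Γ → Circle, ∀ r s : Γ, τ r s = β r * β s * (β (r * s))⁻¹ * σ r s

/-- The subgroup `H(n) ≅ ℤⁿ` of `G n`: only the coordinates `r_n` and `r_{jn}` may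
be nonzero. -/
def Hsub (n : ℕ) : Subgroup (G n) where
  carrier := {r | (∀ i : Fin n, (i : ℕ) + 1 < n → r.u i = 0) ∧
                  ∀ p : PairIdx n, (p.1.2 : ℕ) + 1 < n → r.v p = 0}
  one_mem' := ⟨fun _ _ => rfl, fun _ _ => rfl⟩
  mul_mem' := by
    rintro r s ⟨hr1, hr2⟩ ⟨hs1, hs2⟩
    refine ⟨fun i hi => ?_, fun p hp => ?_⟩
    · simp [hr1 i hi, hs1 i hi]
    · simp [hr2 p hp, hs2 p hp, hs1 p.1.2 hp]
  inv_mem' := by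
    rintro r ⟨hr1, hr2⟩
    refine ⟨fun i hi => ?_, fun p hp => ?_⟩
    · simp [hr1 i hi]
    · simp [hr2 p hp, hr1 p.1.2 hp]

/-- The subgroup `G(n-1)` of `G n`: the coordinates `r_n` and `r_{jn}` vanish. -/
def Gsub (n : ℕ) : Subgroup (G n) where
  carrier := {r | (∀ i : Fin n, (i : ℕ) + 1 = n → r.u i = 0) ∧
                  ∀ p : PairIdx n, (p.1.2 : ℕ) + 1 = n → r.v p = 0}
  one_mem' := ⟨fun _ _ => rfl, fun _ _ => rfl⟩
  mul_mem' := by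
    rintro r s ⟨hr1, hr2⟩ ⟨hs1, hs2⟩
    refine ⟨fun i hi => ?_, fun p hp => ?_⟩
    · simp [hr1 i hi, hs1 i hi]
    · simp [hr2 p hp, hs2 p hp, hs1 p.1.2 hp]
  inv_mem' := by
    rintro r ⟨hr1, hr2⟩
    refine ⟨fun i hi => ?_, fun p hp => ?_⟩
    · simp [hr1 i hi]
    · simp [hr2 p hp, hr1 p.1.2 hp]

lemma mem_Hsub_iff {n : ℕ} {r : G n} :
    r ∈ Hsub n ↔ (∀ i : Fin n, (i : ℕ) + 1 < n → r.u i = 0) ∧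
      ∀ p : PairIdx n, (p.1.2 : ℕ) + 1 < n → r.v p = 0 := Iff.rfl

lemma mem_Gsub_iff {n : ℕ} {r : G n} :
    r ∈ Gsub n ↔ (∀ i : Fin n, (i : ℕ) + 1 = n → r.u i = 0) ∧
      ∀ p : PairIdx n, (p.1.2 : ℕ) + 1 = n → r.v p = 0 := Iff.rfl

/-- `H(n)` is a normal subgroup; conjugation preserves it. -/
lemma conj_mem_Hsub {n : ℕ} (s : G n) {a : G n} (ha : a ∈ Hsub n) :
    s * a * s⁻¹ ∈ Hsub n := by
  obtain ⟨ha1, ha2⟩ := ha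
  refine ⟨fun i hi => ?_, fun p hp => ?_⟩
  · simp [ha1 i hi]
  · have hj : (p.1.1 : ℕ) + 1 < n := by
      have h2 : (p.1.1 : ℕ) < (p.1.2 : ℕ) := p.2
      omega
    simp [ha2 p hp, ha1 p.1.2 hp, ha1 p.1.1 hj]

/-- The action `α_b(a) = b a b⁻¹` of `G(n-1)` on `H(n)`. -/
def conjH {n : ℕ} (b : Gsub n) (a : Hsub n) : Hsub n :=
  ⟨(b : G n) * (a : G n) * (b : G n)⁻¹, conj_mem_Hsub _ a.2⟩

/-- The `H(n)`-part of the unique factorization `r = a·b`, `a ∈ H(n)`, `b ∈ G(n-1)`. -/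
def hpart {n : ℕ} (r : G n) : Hsub n :=
  ⟨⟨fun i => if (i : ℕ) + 1 = n then r.u i else 0,
    fun p => if (p.1.2 : ℕ) + 1 = n then r.v p else 0⟩, by
    refine ⟨fun i hi => ?_, fun p hp => ?_⟩
    · exact if_neg (by omega)
    · exact if_neg (by omega)⟩

/-- The `G(n-1)`-part of the unique factorization `r = a·b`. -/
def gpart {n : ℕ} (r : G n) : Gsub n :=
  ⟨⟨fun i => if (i : ℕ) + 1 = n then 0 else r.u i,
    fun p => if (p.1.2 : ℕ) + 1 = n then 0 else r.v p⟩, by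
    refine ⟨fun i hi => ?_, fun p hp => ?_⟩
    · exact if_pos hi
    · exact if_pos hp⟩

/-- `r` indeed factors as `hpart r * gpart r`. -/
lemma hpart_mul_gpart {n : ℕ} (r : G n) : ((hpart r : G n)) * (gpart r : G n) = r := by
  refine G.ext ?_ ?_ <;> funext x
  · show (if ((x : ℕ)) + 1 = n then r.u x else 0) + (if (x : ℕ) + 1 = n then 0 else r.u x) = r.u x
    split <;> ring
  · show (if ((x.1.2 : ℕ)) + 1 = n then r.v x else 0) +
      (if (x.1.2 : ℕ) + 1 = n then 0 else r.v x) +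
      (if ((x.1.1 : ℕ)) + 1 = n then r.u x.1.1 else 0) *
        (if (x.1.2 : ℕ) + 1 = n then 0 else r.u x.1.2) = r.v x
    have h2 : (x.1.1 : ℕ) < (x.1.2 : ℕ) := x.2
    have h3 : (x.1.2 : ℕ) < n := x.1.2.isLt
    rcases eq_or_ne ((x.1.2 : ℕ) + 1) n with h | h
    · rw [if_pos h, if_pos h, if_pos h, if_neg (by omega)]; ring
    · rw [if_neg h, if_neg h, if_neg h, if_neg (show ¬((x.1.1 : ℕ) + 1 = n) by omega)]
      ring

/-- An admissible pair `(σ_H, g)` (Mackey data with trivial multiplier on `G(n-1)`). -/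
structure AdmissiblePair (n : ℕ) (σH : Hsub n → Hsub n → Circle)
    (g : Hsub n → Gsub n → Circle) : Prop where
  multH : IsMultiplier σH
  g_one_right : ∀ a : Hsub n, g a 1 = 1
  g_one_left : ∀ b : Gsub n, g 1 b = 1
  g_add : ∀ (a a' : Hsub n) (b : Gsub n),
    g (a * a') b = σH (conjH b a) (conjH b a') * (σH a a')⁻¹ * (g a b * g a' b)
  g_mul : ∀ (a : Hsub n) (b b' : Gsub n), g a (b * b') = g (conjH b' a) b * g a b'

/-- An admissible triple `(σ_H, g, σ')`. -/
def AdmissibleTriple (n : ℕ) (σH : Hsub n → Hsub n → Circle)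
    (g : Hsub n → Gsub n → Circle) (σ' : Gsub n → Gsub n → Circle) : Prop :=
  AdmissiblePair n σH g ∧ IsMultiplier σ'

/-- The map `σ_n(a′b, ab′) = σ_H(a′, α_b(a)) g(a,b) σ′(b,b′)` defined via the unique
factorizations. -/
noncomputable def sigmaN {n : ℕ} (σH : Hsub n → Hsub n → Circle) (g : Hsub n → Gsub n → Circle)
    (σ' : Gsub n → Gsub n → Circle) (r s : G n) : Circle :=
  σH (hpart r) (conjH (gpart r) (hpart s)) * g (hpart s) (gpart r) *
    σ' (gpart r) (gpart s)

/-- The map `τ(a′b, ab′) = σ_H(a′, α_b(a)) g(a,b)` defined via the unique factorizations. -/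
noncomputable def tauN {n : ℕ} (σH : Hsub n → Hsub n → Circle) (g : Hsub n → Gsub n → Circle)
    (r s : G n) : Circle :=
  σH (hpart r) (conjH (gpart r) (hpart s)) * g (hpart s) (gpart r)

/-- The generator `u_i`. -/
def uE {n : ℕ} (i : Fin n) : G n := ⟨fun j => if j = i then 1 else 0, fun _ => 0⟩

/-- The generator `v_{jk}`. -/
def vE {n : ℕ} (j k : Fin n) : G n := ⟨fun _ => 0, fun p => if p.1 = (j, k) then 1 else 0⟩

/-- The last index `n` (i.e. `n-1` in `Fin n`). -/
def lastI (n : ℕ) (hn : 0 < n) : Fin n := ⟨n - 1, by omega⟩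

/-- `u_n` as an element of `H(n)`. -/
def unH {n : ℕ} (hn : 0 < n) : Hsub n :=
  ⟨uE (lastI n hn), by
    refine ⟨fun i hi => ?_, fun p hp => rfl⟩
    have h : i ≠ lastI n hn := by
      intro h; apply absurd hi; rw [h]; show ¬ (n - 1) + 1 < n; omega
    simp [uE, h]⟩

/-- `u_i` (for `i < n`) as an element of `G(n-1)`. -/
def uiG {n : ℕ} (i : Fin n) (hi : (i : ℕ) + 1 < n) : Gsub n :=
  ⟨uE i, by
    refine ⟨fun j hj => ?_, fun p hp => rfl⟩
    have h : j ≠ i := by intro h; rw [h] at hj; omega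
    simp [uE, h]⟩

/-- `v_{in}` (for `i < n`) as an element of `H(n)`. -/
def vinH {n : ℕ} (i : Fin n) (hi : (i : ℕ) + 1 < n) : Hsub n :=
  ⟨vE i (lastI n (by omega)), by
    refine ⟨fun j hj => rfl, fun p hp => ?_⟩
    have h : p.1 ≠ (i, lastI n (by omega)) := by
      intro h
      have h2 : (p.1.2 : ℕ) = n - 1 := by rw [h]; rfl
      omega
    simp [vE, h]⟩

/-- `v_{ij}` (for `j < n`) as an element of `G(n-1)`. -/
def vijG {n : ℕ} (i j : Fin n) (hj : (j : ℕ) + 1 < n) : Gsub n :=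
  ⟨vE i j, by
    refine ⟨fun k hk => rfl, fun p hp => ?_⟩
    have h : p.1 ≠ (i, j) := by
      intro h
      have h2 : (p.1.2 : ℕ) = (j : ℕ) := by rw [h]
      omega
    simp [vE, h]⟩

/-- The "word part" `w(a)` of `a ∈ H(n)`. -/
def wH {n : ℕ} (a : Hsub n) : Hsub n :=
  ⟨⟨(a : G n).u, fun _ => 0⟩,
    ⟨fun i hi => (mem_Hsub_iff.mp a.2).1 i hi, fun _ _ => rfl⟩⟩

/-- The "central part" `z(a)` of `a ∈ H(n)`. -/
def zH {n : ℕ} (a : Hsub n) : Hsub n :=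
  ⟨⟨fun _ => 0, (a : G n).v⟩,
    ⟨fun _ _ => rfl, fun p hp => (mem_Hsub_iff.mp a.2).2 p hp⟩⟩

/-- The "word part" `w(b)` of `b ∈ G(n-1)`. -/
def wG {n : ℕ} (b : Gsub n) : Gsub n :=
  ⟨⟨(b : G n).u, fun _ => 0⟩,
    ⟨fun i hi => (mem_Gsub_iff.mp b.2).1 i hi, fun _ _ => rfl⟩⟩

/-- The "central part" `z(b)` of `b ∈ G(n-1)`. -/
def zG {n : ℕ} (b : Gsub n) : Gsub n :=
  ⟨⟨fun _ => 0, (b : G n).v⟩,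
    ⟨fun _ _ => rfl, fun p hp => (mem_Gsub_iff.mp b.2).2 p hp⟩⟩

/-- `g(v_{in}, u_j)`, as a total function (equal to `1` outside the admissible range). -/
noncomputable def gvu {n : ℕ} (g : Hsub n → Gsub n → Circle) (i j : Fin n) : Circle :=
  if h : (i : ℕ) + 1 < n ∧ (j : ℕ) + 1 < n then g (vinH i h.1) (uiG j h.2) else 1

/-- `g(u_n, v_{ij})`, as a total function (equal to `1` outside the admissible range). -/
noncomputable def guv {n : ℕ} (g : Hsub n → Gsub n → Circle) (i j : Fin n) : Circle :=
  if h : (j : ℕ) + 1 < n then g (unH (by omega)) (vijG i j h) else 1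

/-- A normalized pair `(σ_H, g)`: admissible, with `σ_H` of the standard `λ`-form, and
`g(u_n, u_i) = 1` for all `1 ≤ i ≤ n-1`. -/
def Normalized {n : ℕ} (hn : 0 < n) (σH : Hsub n → Hsub n → Circle)
    (g : Hsub n → Gsub n → Circle) (lam : Fin n → Circle) : Prop :=
  AdmissiblePair n σH g ∧
  (∀ a' a : Hsub n, σH a' a =
    ∏ i ∈ Finset.univ.filter (fun i : Fin n => (i : ℕ) + 1 < n),
      lam i ^ (uc (a' : G n) (lastI n hn) * vc (a : G n) i (lastI n hn))) ∧
  ∀ (i : Fin n) (hi : (i : ℕ) + 1 < n), g (unH hn) (uiG i hi) = 1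

/-- The multiplier `σ_λ` of `G n` attached to a family of parameters
`λ_{i,jk} ∈ 𝕋` (`1 ≤ i ≤ k`, `1 ≤ j < k ≤ n`). -/
noncomputable def sigmaLam {n : ℕ} (lam : Fin n → Fin n → Fin n → Circle) (r s : G n) : Circle :=
  (∏ t ∈ Finset.univ.filter
      (fun t : Fin n × Fin n × Fin n => t.1 < t.2.1 ∧ t.2.1 < t.2.2),
    lam t.1 t.2.1 t.2.2 ^ (vc s t.2.1 t.2.2 * uc r t.1 + uc s t.2.2 * vc r t.1 t.2.1) *
    lam t.2.1 t.1 t.2.2 ^ (vc s t.1 t.2.2 * uc r t.2.1 +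
      uc s t.2.2 * (uc r t.1 * uc r t.2.1 - vc r t.1 t.2.1))) *
  ∏ p ∈ Finset.univ.filter (fun p : Fin n × Fin n => p.1 < p.2),
    lam p.1 p.1 p.2 ^ (vc s p.1 p.2 * uc r p.1 +
      uc s p.2 * (uc r p.1 * (uc r p.1 - 1) / 2)) *
    lam p.2 p.1 p.2 ^ (uc r p.2 * (vc s p.1 p.2 + uc r p.1 * uc s p.2) +
      uc r p.1 * (uc s p.2 * (uc s p.2 - 1) / 2))

/-- The extension of the parameter family to indices `i > k`, via
`λ_{k,ij} = λ_{i,jk}⁻¹ λ_{j,ik}` for `i < j < k`. -/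
noncomputable def lamExt {n : ℕ} (lam : Fin n → Fin n → Fin n → Circle) (i j k : Fin n) : Circle :=
  if i ≤ k then lam i j k else (lam j k i)⁻¹ * lam k j i

end FreeNilp

/-!
Let `s` be central and `u_m` the `m`-th generator. In `σ_λ(u_m, s)` and `σ_λ(s, u_m)` only factors
`λ_{m,jk}^{s_{jk}}` survive: those with `m ≤ k` on one side and, after the relation
`λ_{m,ij} = λ_{i,jm}⁻¹ λ_{j,im}`, the inverses of those with `k < m` on the other. So regularity
of `s` says `∏_{j<k} λ_{m,jk}^{s_{jk}} = 1`, i.e. `∑ s_{jk} t_{m,jk} ∈ ℤ`, and for the row `m`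
in which `1` and the `t_{m,jk}` are independent over `ℚ` this forces every `s_{jk} = 0`.
-/

section IncreasingTriples

open Finset

variable {α M : Type*} [Fintype α] [LinearOrder α] [CommMonoid M] (m : α) (f : α × α → M)

lemma prod_triple_ite_fst_eq :
    ∏ t ∈ univ.filter (fun t : α × α × α => t.1 < t.2.1 ∧ t.2.1 < t.2.2),
      (if t.1 = m then f t.2 else 1) =
    ∏ p ∈ univ.filter (fun p : α × α => p.1 < p.2), (if m < p.1 then f p else 1) := by
  rw [← prod_filter, ← prod_filter, filter_filter, filter_filter]
  refine prod_nbij' (fun t => t.2) (fun p => (m, p)) ?_ ?_ ?_ ?_ ?_ <;> grind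

lemma prod_triple_ite_snd_eq :
    ∏ t ∈ univ.filter (fun t : α × α × α => t.1 < t.2.1 ∧ t.2.1 < t.2.2),
      (if t.2.1 = m then f (t.1, t.2.2) else 1) =
    ∏ p ∈ univ.filter (fun p : α × α => p.1 < p.2),
      (if p.1 < m ∧ m < p.2 then f p else 1) := by
  rw [← prod_filter, ← prod_filter, filter_filter, filter_filter]
  refine prod_nbij' (fun t => (t.1, t.2.2)) (fun p => (p.1, m, p.2)) ?_ ?_ ?_ ?_ ?_ <;> grind

lemma prod_triple_ite_thd_eq :
    ∏ t ∈ univ.filter (fun t : α × α × α => t.1 < t.2.1 ∧ t.2.1 < t.2.2),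
      (if t.2.2 = m then f (t.1, t.2.1) else 1) =
    ∏ p ∈ univ.filter (fun p : α × α => p.1 < p.2), (if p.2 < m then f p else 1) := by
  rw [← prod_filter, ← prod_filter, filter_filter, filter_filter]
  refine prod_nbij' (fun t => (t.1, t.2.1)) (fun p => (p.1, p.2, m)) ?_ ?_ ?_ ?_ ?_ <;> grind

end IncreasingTriples

lemma Circle.exp_sum {ι : Type*} (A : Finset ι) (f : ι → ℝ) :
    Circle.exp (∑ i ∈ A, f i) = ∏ i ∈ A, Circle.exp (f i) :=
  map_sum Circle.expHom f A

lemma Circle.exists_intCast_of_prod_exp_zpow_eq_one {ι : Type*} (A : Finset ι) (x : ι → ℝ)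
    (c : ι → ℤ) (h : ∏ i ∈ A, Circle.exp (2 * Real.pi * x i) ^ c i = 1) :
    ∃ N : ℤ, ∑ i ∈ A, c i * x i = N := by
  have hexp : Circle.exp (2 * Real.pi * ∑ i ∈ A, c i * x i) = 1 := by
    refine Eq.trans ?_ h
    rw [Finset.mul_sum, Circle.exp_sum]
    exact Finset.prod_congr rfl fun i _ => by rw [← Circle.exp_intCast_mul]; ring_nf
  obtain ⟨N, hN⟩ := Circle.exp_eq_one.mp hexp
  exact ⟨N, mul_left_cancel₀ Real.two_pi_pos.ne' (by rw [hN]; ring)⟩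

lemma LinearIndependent.eq_zero_of_sum_intCast_mul_eq_intCast {ι : Type*} [Fintype ι]
    {x : ι → ℝ} (hx : LinearIndependent ℚ (fun o : Option ι => o.elim 1 x)) {c : ι → ℤ}
    {N : ℤ} (h : ∑ i, c i * x i = N) : c = 0 := by
  have hcoeff := Fintype.linearIndependent_iff.mp (hx.restrict_scalars' ℤ)
    (fun o => o.elim (-N) c) (by simp [Fintype.sum_option, h])
  exact funext fun i => hcoeff (some i)

namespace FreeNilp

open Finset

section Generator

variable {n : ℕ}

lemma uc_uE (m i : Fin n) : uc (uE m) i = if i = m then 1 else 0 := rfl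

@[simp] lemma vc_uE (m j k : Fin n) : vc (uE m) j k = 0 := by
  unfold vc; split <;> rfl

lemma vc_of_pairIdx (r : G n) (q : PairIdx n) : vc r q.1.1 q.1.2 = r.v q :=
  dif_pos q.2

variable (lam : Fin n → Fin n → Fin n → Circle) {s : G n} (m : Fin n)

lemma sigmaLam_uE_left (hs : ∀ i, s.u i = 0) :
    sigmaLam lam (uE m) s =
      ∏ p ∈ univ.filter (fun p : Fin n × Fin n => p.1 < p.2),
        (if m ≤ p.2 then lam m p.1 p.2 ^ vc s p.1 p.2 else 1) := by
  replace hs : ∀ i, uc s i = 0 := hs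
  set F : Fin n × Fin n → Circle := fun p => lam m p.1 p.2 ^ vc s p.1 p.2
  have triple : ∀ t : Fin n × Fin n × Fin n,
      lam t.1 t.2.1 t.2.2 ^ (vc s t.2.1 t.2.2 * uc (uE m) t.1 +
          uc s t.2.2 * vc (uE m) t.1 t.2.1) *
        lam t.2.1 t.1 t.2.2 ^ (vc s t.1 t.2.2 * uc (uE m) t.2.1 +
          uc s t.2.2 * (uc (uE m) t.1 * uc (uE m) t.2.1 - vc (uE m) t.1 t.2.1)) =
      (if t.1 = m then F t.2 else 1) * (if t.2.1 = m then F (t.1, t.2.2) else 1) := by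
    rintro ⟨a, b, c⟩
    by_cases ha : a = m <;> by_cases hb : b = m <;> simp [F, uc_uE, hs, ha, hb]
  have pair : ∀ p : Fin n × Fin n,
      lam p.1 p.1 p.2 ^ (vc s p.1 p.2 * uc (uE m) p.1 +
          uc s p.2 * (uc (uE m) p.1 * (uc (uE m) p.1 - 1) / 2)) *
        lam p.2 p.1 p.2 ^ (uc (uE m) p.2 * (vc s p.1 p.2 + uc (uE m) p.1 * uc s p.2) +
          uc (uE m) p.1 * (uc s p.2 * (uc s p.2 - 1) / 2)) =
      (if p.1 = m then F p else 1) * (if p.2 = m then F p else 1) := by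
    rintro ⟨a, b⟩
    by_cases ha : a = m <;> by_cases hb : b = m <;> simp [F, uc_uE, hs, ha, hb]
  unfold sigmaLam
  simp only [triple, pair, prod_mul_distrib, prod_triple_ite_fst_eq, prod_triple_ite_snd_eq]
  rw [← prod_mul_distrib, ← prod_mul_distrib, ← prod_mul_distrib]
  refine prod_congr rfl fun p hp => ?_
  have hp : p.1 < p.2 := (mem_filter.mp hp).2
  split_ifs <;> grind

lemma sigmaLam_uE_right
    (hrel : ∀ i j k : Fin n, i < j → j < k → lam k i j = (lam i j k)⁻¹ * lam j i k)
    (hs : ∀ i, s.u i = 0) :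
    sigmaLam lam s (uE m) =
      ∏ p ∈ univ.filter (fun p : Fin n × Fin n => p.1 < p.2),
        (if p.2 < m then (lam m p.1 p.2 ^ vc s p.1 p.2)⁻¹ else 1) := by
  replace hs : ∀ i, uc s i = 0 := hs
  have triple : ∀ t ∈ univ.filter (fun t : Fin n × Fin n × Fin n => t.1 < t.2.1 ∧ t.2.1 < t.2.2),
      lam t.1 t.2.1 t.2.2 ^ (vc (uE m) t.2.1 t.2.2 * uc s t.1 +
          uc (uE m) t.2.2 * vc s t.1 t.2.1) *
        lam t.2.1 t.1 t.2.2 ^ (vc (uE m) t.1 t.2.2 * uc s t.2.1 +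
          uc (uE m) t.2.2 * (uc s t.1 * uc s t.2.1 - vc s t.1 t.2.1)) =
      if t.2.2 = m then (lam m t.1 t.2.1 ^ vc s t.1 t.2.1)⁻¹ else 1 := by
    rintro ⟨a, b, c⟩ habc
    obtain ⟨hab, hbc⟩ := (mem_filter.mp habc).2
    by_cases hc : c = m
    · subst hc
      simp [uc_uE, hs, hrel a b c hab hbc, mul_zpow, ← zpow_neg, mul_comm]
    · simp [uc_uE, hs, hc]
  have pair : ∀ p : Fin n × Fin n,
      lam p.1 p.1 p.2 ^ (vc (uE m) p.1 p.2 * uc s p.1 +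
          uc (uE m) p.2 * (uc s p.1 * (uc s p.1 - 1) / 2)) *
        lam p.2 p.1 p.2 ^ (uc s p.2 * (vc (uE m) p.1 p.2 + uc s p.1 * uc (uE m) p.2) +
          uc s p.1 * (uc (uE m) p.2 * (uc (uE m) p.2 - 1) / 2)) = 1 := by
    simp [hs]
  unfold sigmaLam
  rw [prod_congr rfl triple,
    prod_triple_ite_thd_eq (f := fun p => (lam m p.1 p.2 ^ vc s p.1 p.2)⁻¹)]
  simp only [pair, prod_const_one, mul_one]

end Generator

lemma prod_zpow_eq_one_of_sigmaLam_comm {n : ℕ} (lam : Fin n → Fin n → Fin n → Circle)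
    (hrel : ∀ i j k : Fin n, i < j → j < k → lam k i j = (lam i j k)⁻¹ * lam j i k)
    {s : G n} (hs : ∀ i, s.u i = 0) (m : Fin n)
    (hcomm : sigmaLam lam s (uE m) = sigmaLam lam (uE m) s) :
    ∏ q : PairIdx n, lam m q.1.1 q.1.2 ^ s.v q = 1 := by
  rw [sigmaLam_uE_right lam m hrel hs, sigmaLam_uE_left lam m hs] at hcomm
  simp only [← vc_of_pairIdx]
  rw [← prod_subtype (univ.filter fun p : Fin n × Fin n => p.1 < p.2) (by simp)
    (fun p => lam m p.1 p.2 ^ vc s p.1 p.2)]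
  calc ∏ p ∈ univ.filter (fun p : Fin n × Fin n => p.1 < p.2), lam m p.1 p.2 ^ vc s p.1 p.2
      = ∏ p ∈ univ.filter (fun p : Fin n × Fin n => p.1 < p.2),
          ((if m ≤ p.2 then lam m p.1 p.2 ^ vc s p.1 p.2 else 1) *
            (if p.2 < m then (lam m p.1 p.2 ^ vc s p.1 p.2)⁻¹ else 1)⁻¹) :=
        prod_congr rfl fun p _ => by
          rcases le_or_gt m p.2 with h | h
          · simp [h, not_lt.mpr h]
          · simp [h, not_le.mpr h]
    _ = 1 := by rw [prod_mul_distrib, prod_inv_distrib, ← hcomm, mul_inv_cancel]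

theorem only_trivial_regular_of_independent_row_general (n : ℕ)
    (t : Fin n → Fin n → Fin n → ℝ)
    (lam : Fin n → Fin n → Fin n → Circle)
    (hlam : ∀ i j k : Fin n, lam i j k = Circle.exp (2 * Real.pi * t i j k))
    (hrel : ∀ i j k : Fin n, i < j → j < k → lam k i j = (lam i j k)⁻¹ * lam j i k)
    (hind : ∃ i : Fin n,
      LinearIndependent ℚ (fun o : Option (PairIdx n) =>
        o.elim (1 : ℝ) fun p => t i p.1.1 p.1.2)) :
    ∀ s : G n, (∀ i, s.u i = 0) →
      (∀ r : G n, sigmaLam lam s r = sigmaLam lam r s) → s = 1 := by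
  intro s hs hreg
  obtain ⟨m, hm⟩ := hind
  have hrow := prod_zpow_eq_one_of_sigmaLam_comm lam hrel hs m (hreg (uE m))
  simp only [hlam] at hrow
  obtain ⟨N, hN⟩ := Circle.exists_intCast_of_prod_exp_zpow_eq_one _ _ _ hrow
  have hv := hm.eq_zero_of_sum_intCast_mul_eq_intCast hN
  ext i
  · exact hs i
  · exact congrFun hv i

/-- if for some row `i` the numbers `t_{i,jk}` together with `1` are
linearly independent over `ℚ`, then the identity is the only `σ_λ`-regular central
element. -/
theorem only_trivial_regular_of_independent_row (n : ℕ) (hn : 2 ≤ n)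
    (t : Fin n → Fin n → Fin n → ℝ)
    (ht : ∀ i j k : Fin n, j < k → t i j k ∈ Set.Ico (0 : ℝ) 1)
    (lam : Fin n → Fin n → Fin n → Circle)
    (hlam : ∀ i j k : Fin n, lam i j k = Circle.exp (2 * Real.pi * t i j k))
    (hrel : ∀ i j k : Fin n, i < j → j < k → lam k i j = (lam i j k)⁻¹ * lam j i k)
    (hind : ∃ i : Fin n,
      LinearIndependent ℚ (fun o : Option (PairIdx n) =>
        o.elim (1 : ℝ) fun p => t i p.1.1 p.1.2)) :
    ∀ s : G n, (∀ i, s.u i = 0) →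
      (∀ r : G n, sigmaLam lam s r = sigmaLam lam r s) → s = 1 :=
  only_trivial_regular_of_independent_row_general n t lam hlam hrel hind

end FreeNilp
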